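/- arXiv:2302.09733 — 2 statements merged into one kernel-verified Lean document; each statement's English description precedes it below -/
import Mathlib

section
/- Let n ≥ 1, δ > 0, C ≥ 0, and let u : ℝⁿ × (0, ∞) → ℝ be a positive continuously differentiable function such that at every point (x, t), ‖∇u(x,t)‖²/u(x,t)² − δ·(∂u/∂t)(x,t)/u(x,t) ≤ C + C/t, where ∇u denotes the spatial gradient. Then for all 0 < t₁ < t₂ and all x, y ∈ ℝⁿ, u(x, t₁) ≤ u(y, t₂)·(t₂/t₁)^{C/δ}·exp( (C/δ)·(t₂ − t₁) + δ·‖x − y‖²/(4(t₂ − t₁)) ). -/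
/-!
Along the segment `γ` from `(x, t₁)` to `(y, t₂)`, with constant velocity `v`, the Li–Yau bound
and Young's inequality `⟪v, ∇ log u⟫ ≥ -‖∇ log u‖²/δ - δ‖v‖²/4` make
`log u(γ s, s) + (δ‖v‖²/4 + C/δ) s + (C/δ) log s` nondecreasing in `s`. Comparing its values at
`t₁` and `t₂` and using `‖v‖ = ‖x - y‖/(t₂ - t₁)` gives the estimate after exponentiating.
-/

open scoped RealInnerProductSpace

section

variable {E : Type*} [NormedAddCommGroup E] [InnerProductSpace ℝ E]

theorem neg_le_inner_add_div_of_sq_div_sub_le {g v : E} {p U δ K : ℝ} (hδ : 0 < δ)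
    (hU : 0 < U) (h : ‖g‖ ^ 2 / U ^ 2 - δ * p / U ≤ K) :
    -(δ * ‖v‖ ^ 2 / 4 + K / δ) ≤ (⟪g, v⟫ + p) / U := by
  have hinner : -(‖g‖ * ‖v‖) ≤ ⟪g, v⟫ := neg_le_of_abs_le (abs_real_inner_le_norm g v)
  have hp : ‖g‖ ^ 2 - K * U ^ 2 ≤ δ * p * U := by
    have := mul_le_mul_of_nonneg_right h (sq_nonneg U)
    field_simp at this
    linarith
  rw [le_div_iff₀ hU, ← mul_le_mul_iff_of_pos_left hδ]
  field_simp
  nlinarith [mul_le_mul_of_nonneg_left hinner (mul_pos hδ hU).le,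
    sq_nonneg (‖g‖ - δ * ‖v‖ * U / 2)]

variable [CompleteSpace E]

theorem hasDerivAt_comp_prodMk_eq_inner_gradient_add_deriv {u : E → ℝ → ℝ} {γ : ℝ → E}
    {v : E} {s : ℝ} (hu : DifferentiableAt ℝ (fun p : E × ℝ => u p.1 p.2) (γ s, s))
    (hγ : HasDerivAt γ v s) :
    HasDerivAt (fun r => u (γ r) r)
      (⟪gradient (fun z => u z s) (γ s), v⟫ + deriv (u (γ s)) s) s := by
  set L := fderiv ℝ (fun p : E × ℝ => u p.1 p.2) (γ s, s)
  have hL : HasFDerivAt (fun p : E × ℝ => u p.1 p.2) L (γ s, s) := hu.hasFDerivAt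
  have hslice : HasFDerivAt (fun z : E => (z, s)) (.inl ℝ E ℝ) (γ s) :=
    hasFDerivAt_prodMk_left (γ s) s
  have hspace : HasFDerivAt (fun z => u z s) (L.comp (.inl ℝ E ℝ)) (γ s) :=
    hL.comp (g := fun p : E × ℝ => u p.1 p.2) (γ s) hslice
  have htime : HasDerivAt (u (γ s)) (L (0, 1)) s :=
    hL.comp_hasDerivAt s ((hasDerivAt_const s (γ s)).prodMk (hasDerivAt_id s))
  have hinner : ⟪gradient (fun z => u z s) (γ s), v⟫ = L (v, 0) := by
    rw [hspace.hasGradientAt.gradient, ← InnerProductSpace.toDual_apply_apply,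
      LinearIsometryEquiv.apply_symm_apply]
    rfl
  rw [hinner, htime.deriv, ← map_add, Prod.mk_add_mk, add_zero, zero_add]
  exact hL.comp_hasDerivAt (f := fun r => (γ r, r)) s (hγ.prodMk (hasDerivAt_id s))

theorem monotoneOn_log_add_of_liYau {u : E → ℝ → ℝ} {δ C : ℝ} (hδ : 0 < δ)
    (hu_pos : ∀ x t, 0 < t → 0 < u x t)
    (hu_diff : ContDiffOn ℝ 1 (fun p : E × ℝ => u p.1 p.2) (Set.univ ×ˢ Set.Ioi (0 : ℝ)))
    (hLY : ∀ x t, 0 < t →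
      ‖gradient (fun y => u y t) x‖ ^ 2 / (u x t) ^ 2 - δ * deriv (u x) t / u x t ≤ C + C / t)
    {γ : ℝ → E} {v : E} (hγ : ∀ s, HasDerivAt γ v s) :
    MonotoneOn (fun s => Real.log (u (γ s) s) + (δ * ‖v‖ ^ 2 / 4 + C / δ) * s +
      C / δ * Real.log s) (Set.Ioi 0) := by
  have hderiv : ∀ s ∈ Set.Ioi (0 : ℝ), HasDerivAt (fun s => Real.log (u (γ s) s) +
      (δ * ‖v‖ ^ 2 / 4 + C / δ) * s + C / δ * Real.log s)
      ((⟪gradient (fun z => u z s) (γ s), v⟫ + deriv (u (γ s)) s) / u (γ s) s +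
        (δ * ‖v‖ ^ 2 / 4 + C / δ) + C / δ * s⁻¹) s := by
    intro s hs
    have hu : DifferentiableAt ℝ (fun p : E × ℝ => u p.1 p.2) (γ s, s) :=
      (hu_diff.differentiableOn one_ne_zero).differentiableAt
        (prod_mem_nhds Filter.univ_mem (Ioi_mem_nhds hs))
    have hpath := hasDerivAt_comp_prodMk_eq_inner_gradient_add_deriv hu (hγ s)
    refine ((hpath.log (hu_pos _ _ hs).ne').add ?_).add ?_
    · simpa using (hasDerivAt_id s).const_mul (δ * ‖v‖ ^ 2 / 4 + C / δ)
    · exact (Real.hasDerivAt_log hs.ne').const_mul (C / δ)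
  refine monotoneOn_of_deriv_nonneg (convex_Ioi 0)
    (fun s hs => (hderiv s hs).continuousAt.continuousWithinAt) ?_ ?_ <;>
    rw [interior_Ioi]
  · exact fun s hs => (hderiv s hs).differentiableAt.differentiableWithinAt
  · intro s hs
    rw [(hderiv s hs).deriv]
    have hYoung := neg_le_inner_add_div_of_sq_div_sub_le (v := v) hδ (hu_pos _ _ hs)
      (hLY (γ s) s hs)
    have hK : (C + C / s) / δ = C / δ + C / δ * s⁻¹ := by ring
    linarith

end

theorem stmt_9_general (n : ℕ) (δ C : ℝ) (hδ : 0 < δ)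
    (u : EuclideanSpace ℝ (Fin n) → ℝ → ℝ)
    (hu_pos : ∀ x t, 0 < t → 0 < u x t)
    (hu_diff : ContDiffOn ℝ 1 (fun p : EuclideanSpace ℝ (Fin n) × ℝ => u p.1 p.2)
      (Set.univ ×ˢ Set.Ioi (0 : ℝ)))
    (hLY : ∀ x t, 0 < t →
      ‖gradient (fun y => u y t) x‖ ^ 2 / (u x t) ^ 2 - δ * deriv (u x) t / u x t ≤ C + C / t)
    (t₁ t₂ : ℝ) (ht₁ : 0 < t₁) (ht₁₂ : t₁ < t₂) (x y : EuclideanSpace ℝ (Fin n)) :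
    u x t₁ ≤ u y t₂ * (t₂ / t₁) ^ (C / δ) *
      Real.exp ((C / δ) * (t₂ - t₁) + δ * ‖x - y‖ ^ 2 / (4 * (t₂ - t₁))) := by
  have hT : 0 < t₂ - t₁ := sub_pos.2 ht₁₂
  have ht₂ : 0 < t₂ := ht₁.trans ht₁₂
  set v := (t₂ - t₁)⁻¹ • (y - x)
  have hγ : ∀ s, HasDerivAt (fun s => x + (s - t₁) • v) v s := fun s => by
    simpa using (((hasDerivAt_id s).sub_const t₁).smul_const v).const_add x
  have hmono := monotoneOn_log_add_of_liYau hδ hu_pos hu_diff hLY hγ ht₁ ht₂ ht₁₂.le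
  have hy : x + (t₂ - t₁) • v = y := by
    rw [smul_smul, mul_inv_cancel₀ hT.ne', one_smul, add_sub_cancel]
  have hv : δ * ‖v‖ ^ 2 / 4 * (t₂ - t₁) = δ * ‖x - y‖ ^ 2 / (4 * (t₂ - t₁)) := by
    rw [norm_smul, norm_inv, Real.norm_of_nonneg hT.le, norm_sub_rev]
    field_simp
  simp only [sub_self, zero_smul, add_zero, hy] at hmono
  have huy := hu_pos y t₂ ht₂
  rw [← Real.log_le_log_iff (hu_pos x t₁ ht₁) (by positivity),
    Real.log_mul (by positivity) (Real.exp_pos _).ne', Real.log_mul huy.ne' (by positivity),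
    Real.log_exp, Real.log_rpow (div_pos ht₂ ht₁), Real.log_div ht₂.ne' ht₁.ne']
  linarith

/-- Euclidean Harnack inequality from a Li–Yau type gradient estimate: if `u > 0` is `C¹`
on `ℝⁿ × (0,∞)` and satisfies `‖∇u‖²/u² − δ u_t/u ≤ C + C/t` everywhere, then for
`0 < t₁ < t₂` and all `x, y`:
`u(x,t₁) ≤ u(y,t₂) (t₂/t₁)^{C/δ} exp((C/δ)(t₂−t₁) + δ‖x−y‖²/(4(t₂−t₁)))`. -/
theorem stmt_9 (n : ℕ) (hn : 1 ≤ n) (δ C : ℝ) (hδ : 0 < δ) (hC : 0 ≤ C)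
    (u : EuclideanSpace ℝ (Fin n) → ℝ → ℝ)
    (hu_pos : ∀ x t, 0 < t → 0 < u x t)
    (hu_diff : ContDiffOn ℝ 1 (fun p : EuclideanSpace ℝ (Fin n) × ℝ => u p.1 p.2)
      (Set.univ ×ˢ Set.Ioi (0 : ℝ)))
    (hLY : ∀ x t, 0 < t →
      ‖gradient (fun y => u y t) x‖ ^ 2 / (u x t) ^ 2 - δ * deriv (u x) t / u x t ≤ C + C / t)
    (t₁ t₂ : ℝ) (ht₁ : 0 < t₁) (ht₁₂ : t₁ < t₂) (x y : EuclideanSpace ℝ (Fin n)) :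
    u x t₁ ≤ u y t₂ * (t₂ / t₁) ^ (C / δ) *
      Real.exp ((C / δ) * (t₂ - t₁) + δ * ‖x - y‖ ^ 2 / (4 * (t₂ - t₁))) :=
  stmt_9_general n δ C hδ u hu_pos hu_diff hLY t₁ t₂ ht₁ ht₁₂ x y
end

section
/- Let n ≥ 1, δ > 0, C ≥ 0, and let u : ℝⁿ × (0, ∞) → ℝ be a positive continuously differentiable function such that at every point (x, t), ‖∇u(x,t)‖²/u(x,t)² − δ·(∂u/∂t)(x,t)/u(x,t) ≤ C + C/t, where ∇u denotes the spatial gradient; assume moreover that y ↦ u(y, t₂)² is integrable on every ball. Then for all 0 < t₁ < t₂, x ∈ ℝⁿ and r > 0, u(x, t₁) ≤ (vol B(x,r))^{−1/2}·( ∫_{B(x,r)} u(y, t₂)² dy )^{1/2}·(t₂/t₁)^{C/δ}·exp( (C/δ)·(t₂ − t₁) + δ·r²/(4(t₂ − t₁)) ), where B(x,r) is the Euclidean ball of radius r centered at x and vol denotes Lebesgue measure. -/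
/-!
Along the space-time segment `s ↦ (x + s (y - x), t₁ + s (t₂ - t₁))`, the Li–Yau inequality
bounds `-∂ₜ log u` by `(C + C/t)/δ - |∇ log u|²/δ`, and the AM-GM inequality absorbs the spatial
term `⟪∇ log u, y - x⟫` into `|∇ log u|²` at the price of `δ |y - x|² / (4 (t₂ - t₁))`.
Integrating over `s ∈ [0, 1]` gives the Harnack inequality
`u(x,t₁) ≤ u(y,t₂) (t₂/t₁)^{C/δ} exp((C/δ)(t₂ - t₁) + δ |y - x|² / (4 (t₂ - t₁)))`.
Squaring it and averaging over `y ∈ B(x,r)` yields the mean value inequality.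
-/

open MeasureTheory
open scoped RealInnerProductSpace

section Harnack

variable {E : Type*} [NormedAddCommGroup E] [InnerProductSpace ℝ E]

theorem li_yau_path_derivative_nonneg (g v : E) {U T Δ δ : ℝ} (D C : ℝ)
    (hU : 0 < U) (hT : 0 < T) (hΔ : 0 < Δ) (hδ : 0 < δ)
    (hLY : ‖g‖ ^ 2 / U ^ 2 - δ * D / U ≤ C + C / T) :
    0 ≤ (⟪g, v⟫ + Δ * D) / U + δ * ‖v‖ ^ 2 / (4 * Δ) + C / δ * Δ + C / δ * (Δ / T) := by
  have hsq : 0 ≤ (2 * Δ * ‖g‖ - δ * ‖v‖ * U) ^ 2 / (4 * Δ * δ * U ^ 2) := by positivity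
  have hinner : 0 ≤ ⟪g, v⟫ + ‖g‖ * ‖v‖ := by
    linarith [neg_abs_le ⟪g, v⟫, abs_real_inner_le_norm g v]
  have hLY' : 0 ≤ δ * D / U - (‖g‖ ^ 2 / U ^ 2 - C - C / T) := by linarith
  -- completing the square in `‖g‖` after using the Li–Yau bound on `D`
  have key : (⟪g, v⟫ + Δ * D) / U + δ * ‖v‖ ^ 2 / (4 * Δ) + C / δ * Δ + C / δ * (Δ / T)
      = (2 * Δ * ‖g‖ - δ * ‖v‖ * U) ^ 2 / (4 * Δ * δ * U ^ 2)
        + (⟪g, v⟫ + ‖g‖ * ‖v‖) / U + Δ / δ * (δ * D / U - (‖g‖ ^ 2 / U ^ 2 - C - C / T)) := by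
    field_simp
    ring
  rw [key]
  have hinner' := div_nonneg hinner hU.le
  have hLY'' := mul_nonneg (div_nonneg hΔ.le hδ.le) hLY'
  linarith

variable [CompleteSpace E]

theorem DifferentiableAt.hasDerivAt_comp_prodMk {u : E → ℝ → ℝ} {γ : ℝ → E} {τ : ℝ → ℝ}
    {v : E} {Δ s : ℝ} (hu : DifferentiableAt ℝ (fun p : E × ℝ => u p.1 p.2) (γ s, τ s))
    (hγ : HasDerivAt γ v s) (hτ : HasDerivAt τ Δ s) :
    HasDerivAt (fun s => u (γ s) (τ s))
      (⟪gradient (fun y => u y (τ s)) (γ s), v⟫ + Δ * deriv (u (γ s)) (τ s)) s := by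
  set L := fderiv ℝ (fun p : E × ℝ => u p.1 p.2) (γ s, τ s)
  have hL : HasFDerivAt (fun p : E × ℝ => u p.1 p.2) L (γ s, τ s) := hu.hasFDerivAt
  have hspace : HasFDerivAt (fun y => u y (τ s)) (L.comp (ContinuousLinearMap.inl ℝ E ℝ)) (γ s) :=
    HasFDerivAt.comp (γ s) (f := fun y => (y, τ s)) hL (hasFDerivAt_prodMk_left _ _)
  have htime : deriv (u (γ s)) (τ s) = L (0, 1) :=
    (hL.comp_hasDerivAt (τ s) ((hasDerivAt_const _ _).prodMk (hasDerivAt_id _))).deriv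
  have hsplit : ((v, Δ) : E × ℝ) = (v, 0) + Δ • (0, 1) := by simp
  have hvalue :
      ⟪gradient (fun y => u y (τ s)) (γ s), v⟫ + Δ * deriv (u (γ s)) (τ s) = L (v, Δ) := by
    rw [inner_gradient_left, hspace.fderiv, htime, hsplit, map_add, map_smul, smul_eq_mul]
    rfl
  rw [hvalue]
  exact hL.comp_hasDerivAt s (hγ.prodMk hτ)

theorem li_yau_harnack_log {δ C : ℝ} (hδ : 0 < δ) {u : E → ℝ → ℝ}
    (hu_pos : ∀ x t, 0 < t → 0 < u x t)
    (hu_diff : DifferentiableOn ℝ (fun p : E × ℝ => u p.1 p.2) (Set.univ ×ˢ Set.Ioi 0))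
    (hLY : ∀ x t, 0 < t →
      ‖gradient (fun y => u y t) x‖ ^ 2 / (u x t) ^ 2 - δ * deriv (u x) t / u x t ≤ C + C / t)
    {t₁ t₂ : ℝ} (ht₁ : 0 < t₁) (ht₁₂ : t₁ < t₂) (x y : E) :
    Real.log (u x t₁) ≤ Real.log (u y t₂) + C / δ * (Real.log t₂ - Real.log t₁)
      + C / δ * (t₂ - t₁) + δ * ‖y - x‖ ^ 2 / (4 * (t₂ - t₁)) := by
  set Δ := t₂ - t₁
  have hΔ : 0 < Δ := sub_pos.2 ht₁₂
  set v := y - x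
  set γ : ℝ → E := fun s => x + s • v
  set τ : ℝ → ℝ := fun s => t₁ + s * Δ
  have hγ (s : ℝ) : HasDerivAt γ v s := by
    simpa [γ] using ((hasDerivAt_id s).smul_const v).const_add x
  have hτ (s : ℝ) : HasDerivAt τ Δ s := by
    simpa [τ] using ((hasDerivAt_id s).mul_const Δ).const_add t₁
  have hτ_pos {s : ℝ} (hs : 0 ≤ s) : 0 < τ s := by positivity
  set φ : ℝ → ℝ := fun s => Real.log (u (γ s) (τ s)) + C / δ * Real.log (τ s)
      + (δ * ‖v‖ ^ 2 / (4 * Δ) + C / δ * Δ) * s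
  set φ' : ℝ → ℝ := fun s =>
    (⟪gradient (fun z => u z (τ s)) (γ s), v⟫ + Δ * deriv (u (γ s)) (τ s)) / u (γ s) (τ s)
      + δ * ‖v‖ ^ 2 / (4 * Δ) + C / δ * Δ + C / δ * (Δ / τ s)
  have hφ {s : ℝ} (hs : 0 ≤ s) : HasDerivAt φ (φ' s) s := by
    have hdiff : DifferentiableAt ℝ (fun p : E × ℝ => u p.1 p.2) (γ s, τ s) :=
      hu_diff.differentiableAt
        ((isOpen_univ.prod isOpen_Ioi).mem_nhds ⟨Set.mem_univ _, hτ_pos hs⟩)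
    have hlog_u := (hdiff.hasDerivAt_comp_prodMk (hγ s) (hτ s)).log (hu_pos _ _ (hτ_pos hs)).ne'
    have hlog_τ := ((hτ s).log (hτ_pos hs).ne').const_mul (C / δ)
    have hlin := (hasDerivAt_id' s).const_mul (δ * ‖v‖ ^ 2 / (4 * Δ) + C / δ * Δ)
    exact ((hlog_u.add hlog_τ).add hlin).congr_deriv (by ring)
  have hφ'_nonneg {s : ℝ} (hs : 0 ≤ s) : 0 ≤ φ' s :=
    li_yau_path_derivative_nonneg _ _ _ _ (hu_pos _ _ (hτ_pos hs)) (hτ_pos hs) hΔ hδ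
      (hLY _ _ (hτ_pos hs))
  have hmono : MonotoneOn φ (Set.Icc 0 1) :=
    monotoneOn_of_hasDerivWithinAt_nonneg (convex_Icc 0 1)
      (fun s hs => (hφ hs.1).continuousAt.continuousWithinAt)
      (fun s hs => (hφ (interior_subset hs).1).hasDerivWithinAt)
      (fun s hs => hφ'_nonneg (interior_subset hs).1)
  have h01 := hmono (Set.left_mem_Icc.2 zero_le_one) (Set.right_mem_Icc.2 zero_le_one) zero_le_one
  simp only [φ, γ, τ, v, Δ, zero_smul, one_smul, add_zero, zero_mul, mul_zero, one_mul, mul_one,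
    add_sub_cancel] at h01
  linarith

theorem li_yau_harnack {δ C : ℝ} (hδ : 0 < δ) {u : E → ℝ → ℝ}
    (hu_pos : ∀ x t, 0 < t → 0 < u x t)
    (hu_diff : DifferentiableOn ℝ (fun p : E × ℝ => u p.1 p.2) (Set.univ ×ˢ Set.Ioi 0))
    (hLY : ∀ x t, 0 < t →
      ‖gradient (fun y => u y t) x‖ ^ 2 / (u x t) ^ 2 - δ * deriv (u x) t / u x t ≤ C + C / t)
    {t₁ t₂ : ℝ} (ht₁ : 0 < t₁) (ht₁₂ : t₁ < t₂) (x y : E) :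
    u x t₁ ≤ u y t₂ * ((t₂ / t₁) ^ (C / δ) *
      Real.exp (C / δ * (t₂ - t₁) + δ * ‖y - x‖ ^ 2 / (4 * (t₂ - t₁)))) := by
  have ht₂ : 0 < t₂ := ht₁.trans ht₁₂
  have hu₂ := hu_pos y t₂ ht₂
  rw [← Real.log_le_log_iff (hu_pos x t₁ ht₁) (by positivity), Real.log_mul hu₂.ne' (by positivity),
    Real.log_mul (by positivity) (Real.exp_pos _).ne', Real.log_rpow (by positivity),
    Real.log_div ht₂.ne' ht₁.ne', Real.log_exp]
  linarith [li_yau_harnack_log hδ hu_pos hu_diff hLY ht₁ ht₁₂ x y]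

end Harnack

theorem le_rms_mul_of_forall_le_mul {α : Type*} [MeasurableSpace α] {μ : Measure α} {s : Set α}
    (hs : MeasurableSet s) (hμ₀ : μ s ≠ 0) (hμ : μ s ≠ ⊤) {g : α → ℝ}
    (hg : IntegrableOn (fun y => g y ^ 2) s μ) {a K : ℝ} (ha : 0 ≤ a) (hK : 0 ≤ K)
    (h : ∀ y ∈ s, a ≤ g y * K) :
    a ≤ (μ s).toReal ^ (-(1 / 2) : ℝ) * (∫ y in s, g y ^ 2 ∂μ) ^ (1 / 2 : ℝ) * K := by
  set V := (μ s).toReal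
  set I := ∫ y in s, g y ^ 2 ∂μ
  have hV : 0 < V := ENNReal.toReal_pos hμ₀ hμ
  have hsq : ∀ y ∈ s, a ^ 2 ≤ K ^ 2 * g y ^ 2 := fun y hy => by
    rw [← mul_pow, mul_comm]
    exact pow_le_pow_left₀ ha (h y hy) 2
  have hint : a ^ 2 * V ≤ K ^ 2 * I := by
    have := setIntegral_mono_on (integrableOn_const hμ) (hg.const_mul _) hs hsq
    rwa [setIntegral_const, integral_const_mul, smul_eq_mul, measureReal_def, mul_comm] at this
  calc a ≤ √(K ^ 2 * I / V) := Real.le_sqrt_of_sq_le ((le_div_iff₀ hV).2 hint)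
    _ = V ^ (-(1 / 2) : ℝ) * I ^ (1 / 2 : ℝ) * K := by
      rw [Real.sqrt_div' _ hV.le, Real.sqrt_mul' _ (setIntegral_nonneg hs fun y _ => sq_nonneg _),
        Real.sqrt_sq hK, Real.sqrt_eq_rpow, Real.sqrt_eq_rpow, Real.rpow_neg hV.le]
      ring

theorem stmt_10_general (n : ℕ) (δ C : ℝ) (hδ : 0 < δ)
    (u : EuclideanSpace ℝ (Fin n) → ℝ → ℝ)
    (hu_pos : ∀ x t, 0 < t → 0 < u x t)
    (hu_diff : ContDiffOn ℝ 1 (fun p : EuclideanSpace ℝ (Fin n) × ℝ => u p.1 p.2)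
      (Set.univ ×ˢ Set.Ioi (0 : ℝ)))
    (hLY : ∀ x t, 0 < t →
      ‖gradient (fun y => u y t) x‖ ^ 2 / (u x t) ^ 2 - δ * deriv (u x) t / u x t ≤ C + C / t)
    (t₁ t₂ : ℝ) (ht₁ : 0 < t₁) (ht₁₂ : t₁ < t₂)
    (hint : ∀ (z : EuclideanSpace ℝ (Fin n)) (ρ : ℝ),
      IntegrableOn (fun y => (u y t₂) ^ 2) (Metric.ball z ρ))
    (x : EuclideanSpace ℝ (Fin n)) (r : ℝ) (hr : 0 < r) :
    u x t₁ ≤ (volume (Metric.ball x r)).toReal ^ (-(1 / 2) : ℝ) *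
      (∫ y in Metric.ball x r, (u y t₂) ^ 2) ^ ((1 / 2) : ℝ) *
      (t₂ / t₁) ^ (C / δ) *
      Real.exp ((C / δ) * (t₂ - t₁) + δ * r ^ 2 / (4 * (t₂ - t₁))) := by
  have ht₂ : 0 < t₂ := ht₁.trans ht₁₂
  have hharnack : ∀ y ∈ Metric.ball x r, u x t₁ ≤ u y t₂ *
      ((t₂ / t₁) ^ (C / δ) * Real.exp ((C / δ) * (t₂ - t₁) + δ * r ^ 2 / (4 * (t₂ - t₁)))) := by
    intro y hy
    have hyx : ‖y - x‖ ≤ r := (mem_ball_iff_norm.1 hy).le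
    have hΔ := sub_pos.2 ht₁₂
    have hu₂ := hu_pos y t₂ ht₂
    refine (li_yau_harnack hδ hu_pos (hu_diff.differentiableOn one_ne_zero) hLY ht₁ ht₁₂ x y).trans
      ?_
    gcongr
  rw [mul_assoc]
  exact le_rms_mul_of_forall_le_mul measurableSet_ball (Metric.measure_ball_pos volume x hr).ne'
    measure_ball_lt_top.ne (hint x r) (hu_pos x t₁ ht₁).le (by positivity) hharnack

/-- Euclidean mean value type inequality: under the Li–Yau type gradient estimate for a
positive `C¹` solution `u` on `ℝⁿ × (0,∞)`, with `y ↦ u(y,t₂)²` integrable on every ball,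
for `0 < t₁ < t₂`, `x ∈ ℝⁿ` and `r > 0`:
`u(x,t₁) ≤ (vol B(x,r))^{−1/2} (∫_{B(x,r)} u(y,t₂)² dy)^{1/2} (t₂/t₁)^{C/δ}
  exp((C/δ)(t₂−t₁) + δ r²/(4(t₂−t₁)))`. -/
theorem stmt_10 (n : ℕ) (hn : 1 ≤ n) (δ C : ℝ) (hδ : 0 < δ) (hC : 0 ≤ C)
    (u : EuclideanSpace ℝ (Fin n) → ℝ → ℝ)
    (hu_pos : ∀ x t, 0 < t → 0 < u x t)
    (hu_diff : ContDiffOn ℝ 1 (fun p : EuclideanSpace ℝ (Fin n) × ℝ => u p.1 p.2)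
      (Set.univ ×ˢ Set.Ioi (0 : ℝ)))
    (hLY : ∀ x t, 0 < t →
      ‖gradient (fun y => u y t) x‖ ^ 2 / (u x t) ^ 2 - δ * deriv (u x) t / u x t ≤ C + C / t)
    (t₁ t₂ : ℝ) (ht₁ : 0 < t₁) (ht₁₂ : t₁ < t₂)
    (hint : ∀ (z : EuclideanSpace ℝ (Fin n)) (ρ : ℝ),
      IntegrableOn (fun y => (u y t₂) ^ 2) (Metric.ball z ρ))
    (x : EuclideanSpace ℝ (Fin n)) (r : ℝ) (hr : 0 < r) :
    u x t₁ ≤ (volume (Metric.ball x r)).toReal ^ (-(1 / 2) : ℝ) *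
      (∫ y in Metric.ball x r, (u y t₂) ^ 2) ^ ((1 / 2) : ℝ) *
      (t₂ / t₁) ^ (C / δ) *
      Real.exp ((C / δ) * (t₂ - t₁) + δ * r ^ 2 / (4 * (t₂ - t₁))) :=
  stmt_10_general n δ C hδ u hu_pos hu_diff hLY t₁ t₂ ht₁ ht₁₂ hint x r hr
end
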